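/- arXiv:2102.07245 — 6 statements merged into one kernel-verified Lean document; each statement's English description precedes it below -/
import Mathlib

section
/- Let S be a proper sampling on {1,…,d} with probability matrix P and unbiased diagonal sketch C. Then for every real d×d matrix L, the entrywise expectation satisfies E[C L C] = P̄ ∘ L, where P̄ is the d×d matrix with entries P̄_{jl} = p_{jl}/(p_j p_l). -/
open scoped BigOperators RealInnerProductSpace
open Matrix

noncomputable section

/-- A proper sampling on `{1,…,d}`: a finitely supported probability distribution over
subsets of `Fin d` whose marginal probabilities are all positive. -/
structure Sampling (d : ℕ) where
  prob : Finset (Fin d) → ℝ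
  nonneg : ∀ S, 0 ≤ prob S
  total : ∑ S : Finset (Fin d), prob S = 1
  margPos : ∀ j : Fin d, 0 < ∑ S : Finset (Fin d), if j ∈ S then prob S else 0

namespace Sampling

variable {d : ℕ} (μ : Sampling d)

/-- Marginal probability `p_j = Prob(j ∈ S)`. -/
def marg (j : Fin d) : ℝ := ∑ S : Finset (Fin d), if j ∈ S then μ.prob S else 0

/-- Probability matrix `P`, with entries `p_{jl} = Prob({j,l} ⊆ S)`. -/
def probMatrix : Matrix (Fin d) (Fin d) ℝ :=
  Matrix.of fun j l => ∑ S : Finset (Fin d), if j ∈ S ∧ l ∈ S then μ.prob S else 0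

/-- The matrix `P̄` with entries `p_{jl}/(p_j p_l)`. -/
def Pbar : Matrix (Fin d) (Fin d) ℝ :=
  Matrix.of fun j l => μ.probMatrix j l / (μ.marg j * μ.marg l)

/-- The matrix `P̃ = P̄ − E` where `E` is the all-ones matrix. -/
def Ptilde : Matrix (Fin d) (Fin d) ℝ := μ.Pbar - Matrix.of fun _ _ => (1 : ℝ)

/-- The unbiased diagonal sketch `C` associated with a realization `S` of the sampling. -/
def sketch (S : Finset (Fin d)) : Matrix (Fin d) (Fin d) ℝ :=
  Matrix.diagonal fun j => if j ∈ S then (μ.marg j)⁻¹ else 0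

end Sampling

/-- Largest eigenvalue of a symmetric matrix, via the Rayleigh quotient. -/
def lambdaMax {d : ℕ} (M : Matrix (Fin d) (Fin d) ℝ) : ℝ :=
  sSup {r : ℝ | ∃ v : Fin d → ℝ, v ⬝ᵥ v = 1 ∧ r = v ⬝ᵥ M.mulVec v}

/-- Smallest eigenvalue of a symmetric matrix, via the Rayleigh quotient. -/
def lambdaMin {d : ℕ} (M : Matrix (Fin d) (Fin d) ℝ) : ℝ :=
  sInf {r : ℝ | ∃ v : Fin d → ℝ, v ⬝ᵥ v = 1 ∧ r = v ⬝ᵥ M.mulVec v}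

/-- `Mdag` is the Moore–Penrose pseudoinverse of `M`. -/
def IsMoorePenrose {m n : Type*} [Fintype m] [Fintype n]
    (M : Matrix m n ℝ) (Mdag : Matrix n m ℝ) : Prop :=
  M * Mdag * M = M ∧ Mdag * M * Mdag = Mdag ∧
    (M * Mdag)ᵀ = M * Mdag ∧ (Mdag * M)ᵀ = Mdag * M

/-- Vectors in `ℝ^d` with the Euclidean inner product. -/
abbrev Vec (d : ℕ) := EuclideanSpace ℝ (Fin d)

/-- Action of a matrix on a Euclidean vector. -/
def mact {d e : ℕ} (M : Matrix (Fin e) (Fin d) ℝ) (x : Vec d) : Vec e :=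
  Matrix.toEuclideanLin M x

/-- Quadratic form `xᵀ M x`, i.e. the squared `M`-seminorm `‖x‖²_M`. -/
def quad {d : ℕ} (M : Matrix (Fin d) (Fin d) ℝ) (x : Vec d) : ℝ := ⟪x, mact M x⟫

/-- `f` is `M`-smooth: `f x ≤ f y + ⟨∇f(y), x−y⟩ + ½ (x−y)ᵀ M (x−y)` for all `x, y`. -/
def MSmooth {d : ℕ} (f : Vec d → ℝ) (M : Matrix (Fin d) (Fin d) ℝ) : Prop :=
  ∀ x y : Vec d, f x ≤ f y + ⟪gradient f y, x - y⟫ + (1 / 2) * quad M (x - y)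

/-- Random iterates driven by i.i.d. draws: `traj x0 step k ω` is the `k`-th iterate along
the sample path `ω` of `k` draws. -/
def traj {V Ω : Type*} (x0 : V) (step : V → Ω → V) : ∀ k : ℕ, (Fin k → Ω) → V
  | 0, _ => x0
  | k + 1, ω => step (traj x0 step k fun i => ω i.castSucc) (ω (Fin.last k))

/-- Expectation `E[φ(x^k)]` of a functional of the `k`-th iterate, over `k` i.i.d. draws
with one-step distribution `P`. -/
def trajExp {V Ω : Type*} [Fintype Ω] (P : Ω → ℝ) (x0 : V) (step : V → Ω → V)
    (φ : V → ℝ) (k : ℕ) : ℝ :=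
  ∑ ω : Fin k → Ω, (∏ i, P (ω i)) * φ (traj x0 step k ω)


/-- for a proper sampling with probability matrix `P` and unbiased diagonal
sketch `C`, for every matrix `L` one has `E[C L C] = P̄ ∘ L` where `P̄_{jl} = p_{jl}/(p_j p_l)`. -/
theorem statement1 {d : ℕ} (μ : Sampling d) (L : Matrix (Fin d) (Fin d) ℝ) :
    ∑ S : Finset (Fin d), μ.prob S • (μ.sketch S * L * μ.sketch S)
      = Matrix.hadamard μ.Pbar L := by
  ext j l
  have h : ∀ S : Finset (Fin d),
      (μ.sketch S * L * μ.sketch S) j l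
        = (if j ∈ S ∧ l ∈ S then (1:ℝ) else 0)
            * ((μ.marg j)⁻¹ * L j l * (μ.marg l)⁻¹) := by
    intro S
    simp only [Sampling.sketch, Matrix.mul_apply, Matrix.diagonal_apply]
    rw [Finset.sum_eq_single l, Finset.sum_eq_single j] <;>
      try (intro b _ hb; simp [hb, Ne.symm hb])
    · by_cases hj : j ∈ S <;> by_cases hl : l ∈ S <;>
        simp [hj, hl] <;> ring
    all_goals simp
  simp only [Matrix.sum_apply, Matrix.smul_apply, smul_eq_mul]
  have : ∀ S : Finset (Fin d),
      μ.prob S * (μ.sketch S * L * μ.sketch S) j l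
        = (if j ∈ S ∧ l ∈ S then μ.prob S else 0)
            * ((μ.marg j)⁻¹ * L j l * (μ.marg l)⁻¹) := by
    intro S
    rw [h S]
    by_cases hjl : j ∈ S ∧ l ∈ S <;> simp [hjl] <;> ring
  rw [Finset.sum_congr rfl fun S _ => this S, ← Finset.sum_mul]
  simp only [Matrix.hadamard_apply, Sampling.Pbar, Sampling.probMatrix, Matrix.of_apply]
  rw [div_eq_mul_inv, mul_inv]
  ring
end
end

section
/- Let L be a symmetric positive semidefinite d×d real matrix, let S be a proper sampling on {1,…,d} with sketch C, and set C̄ = L^{1/2} C L^{†1/2}. Then E[ L^{1/2} (C̄ − I)ᵀ (C̄ − I) L^{1/2} ] = L^{1/2} L^{†1/2} (P̃ ∘ L) L^{†1/2} L^{1/2}, where P̃ = P̄ − E, P̄ has entries p_{jl}/(p_j p_l), and E is the all-ones matrix. -/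
open scoped BigOperators RealInnerProductSpace
open Matrix

noncomputable section

/-!
Expanding the product, each summand is an affine expression in `C` and `C L C`, and
`E[C] = I`, `E[C L C] = P̄ ∘ L`. What remains is the identity
`L^{1/2} L^{†1/2} L^{1/2} = L^{1/2}`. That holds because `L` and `L†` commute (`L L†` is
symmetric), hence so do their square roots, so `(L^{1/2} L^{†1/2} L^{1/2})² = L L† L = L`; both
sides are then positive semidefinite square roots of `L`.
-/

section SquareRoot

variable {A : Type*} [PartialOrder A] [Ring A] [StarRing A] [TopologicalSpace A]
  [StarOrderedRing A] [Algebra ℝ A] [ContinuousFunctionalCalculus ℝ A IsSelfAdjoint]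
  [NonnegSpectrumClass ℝ A] [IsTopologicalRing A] [T2Space A]

theorem Commute.of_mul_self_left {a b : A} (ha : 0 ≤ a) (h : Commute (a * a) b) :
    Commute a b := by
  rw [← CFC.sqrt_mul_self a ha, CFC.sqrt_eq_cfc]
  exact h.cfc_nnreal _

theorem mul_mul_eq_self_of_sqrt_pinv {h g l l' : A} (hh : 0 ≤ h) (hg : 0 ≤ g)
    (hl : h * h = l) (hl' : g * g = l') (hcomm : Commute l l') (hpinv : l * l' * l = l) :
    h * g * h = h := by
  have hhl' : Commute h l' := .of_mul_self_left hh (hl ▸ hcomm)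
  have hgh : Commute g h := .of_mul_self_left hg (hl' ▸ hhl'.symm)
  have hsq : h * g * h * (h * g * h) = h * h := by
    calc h * g * h * (h * g * h) = (g * g) * (h * h) * (h * h) := by
          simp only [mul_assoc, hgh.left_comm]
      _ = h * h := by rw [hl, hl', ← hcomm.eq, hpinv]
  exact (CFC.mul_self_eq_mul_self_iff _ _ (conjugate_nonneg_of_nonneg hg hh) hh).mp hsq

end SquareRoot

theorem IsMoorePenrose.commute {n : Type*} [Fintype n] {M Mdag : Matrix n n ℝ}
    (h : IsMoorePenrose M Mdag) (hM : Mᵀ = M) (hMdag : Mdagᵀ = Mdag) : Commute M Mdag := by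
  have := h.2.2.1
  rwa [transpose_mul, hM, hMdag, eq_comm] at this

namespace Matrix

variable {n R : Type*} [Fintype n] [DecidableEq n] [CommRing R]

theorem mul_sub_one_transpose_mul_sub_one_mul {A B C : Matrix n n R} (hA : Aᵀ = A)
    (hB : Bᵀ = B) (hC : Cᵀ = C) :
    A * (A * C * B - 1)ᵀ * (A * C * B - 1) * A
      = A * B * (C * (A * A) * C) * (B * A) - A * B * C * (A * A) - (A * A) * C * (B * A)
        + A * A := by
  simp only [transpose_sub, transpose_mul, transpose_one, hA, hB, hC]
  noncomm_ring

end Matrix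

namespace Sampling

variable {d : ℕ} (μ : Sampling d)

theorem marg_pos (j : Fin d) : 0 < μ.marg j := μ.margPos j

theorem sketch_transpose (S : Finset (Fin d)) : (μ.sketch S)ᵀ = μ.sketch S :=
  diagonal_transpose _

theorem sum_prob_smul_sketch : ∑ S, μ.prob S • μ.sketch S = 1 := by
  calc ∑ S, μ.prob S • μ.sketch S = diagonal fun j => μ.marg j * (μ.marg j)⁻¹ := by
        ext i j
        by_cases hij : i = j
        · subst hij
          simp [sketch, marg, Finset.sum_mul, Matrix.sum_apply]
        · simp [sketch, Matrix.sum_apply, hij]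
    _ = 1 := by simp [mul_inv_cancel₀ (μ.marg_pos _).ne']

theorem sum_prob_smul_sketch_mul_mul_sketch (M : Matrix (Fin d) (Fin d) ℝ) :
    ∑ S, μ.prob S • (μ.sketch S * M * μ.sketch S) = μ.Pbar ⊙ M := by
  ext i j
  simp only [sketch, mul_diagonal, diagonal_mul, Matrix.sum_apply, Matrix.smul_apply,
    smul_eq_mul, hadamard_apply, Pbar, probMatrix, of_apply, div_eq_mul_inv, Finset.sum_mul]
  refine Finset.sum_congr rfl fun S _ => ?_
  by_cases hi : i ∈ S <;> by_cases hj : j ∈ S <;> simp [hi, hj]; ring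

theorem Ptilde_hadamard (M : Matrix (Fin d) (Fin d) ℝ) : μ.Ptilde ⊙ M = μ.Pbar ⊙ M - M := by
  ext i j
  simp [Ptilde, sub_mul]

theorem sum_prob_smul_affine (A B M N : Matrix (Fin d) (Fin d) ℝ) :
    ∑ S, μ.prob S • (A * (μ.sketch S * M * μ.sketch S) * B - A * μ.sketch S * N
        - N * μ.sketch S * B + N)
      = A * (μ.Pbar ⊙ M) * B - A * N - N * B + N := by
  have hsandwich : ∀ (X Y : Matrix (Fin d) (Fin d) ℝ)
      (F : Finset (Fin d) → Matrix (Fin d) (Fin d) ℝ),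
      ∑ S, μ.prob S • (X * F S * Y) = X * (∑ S, μ.prob S • F S) * Y := by
    intro X Y F
    simp_rw [Finset.mul_sum, Finset.sum_mul, Matrix.mul_smul, Matrix.smul_mul]
  simp only [smul_add, smul_sub, Finset.sum_add_distrib, Finset.sum_sub_distrib, ← Finset.sum_smul,
    μ.total, one_smul]
  rw [hsandwich, hsandwich, hsandwich, sum_prob_smul_sketch_mul_mul_sketch, sum_prob_smul_sketch, mul_one,
    Matrix.mul_one]

end Sampling

/-- with `C̄ = L^{1/2} C L^{†1/2}`,
`E[L^{1/2} (C̄ − I)ᵀ (C̄ − I) L^{1/2}] = L^{1/2} L^{†1/2} (P̃ ∘ L) L^{†1/2} L^{1/2}`.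
Here `Lh` is the PSD square root of `L`, `Ldag` its Moore–Penrose pseudoinverse, and
`Ldh` the PSD square root of `Ldag`. -/
theorem statement2 {d : ℕ} (μ : Sampling d) (L Lh Ldag Ldh : Matrix (Fin d) (Fin d) ℝ)
    (hL : L.PosSemidef) (hLh : Lh.PosSemidef) (hLh2 : Lh * Lh = L)
    (hdag : IsMoorePenrose L Ldag) (hLdh : Ldh.PosSemidef) (hLdh2 : Ldh * Ldh = Ldag) :
    ∑ S : Finset (Fin d),
        μ.prob S • (Lh * (Lh * μ.sketch S * Ldh - 1)ᵀ * (Lh * μ.sketch S * Ldh - 1) * Lh)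
      = Lh * Ldh * Matrix.hadamard μ.Ptilde L * Ldh * Lh := by
  have hLh_symm : Lhᵀ = Lh := hLh.1
  have hLdh_symm : Ldhᵀ = Ldh := hLdh.1
  have hL_symm : Lᵀ = L := hL.1
  have hLdag_symm : Ldagᵀ = Ldag := by rw [← hLdh2, transpose_mul, hLdh_symm]
  have hkey : Lh * Ldh * Lh = Lh := open scoped MatrixOrder in
    mul_mul_eq_self_of_sqrt_pinv hLh.nonneg hLdh.nonneg hLh2 hLdh2
      (hdag.commute hL_symm hLdag_symm) hdag.1
  have hleft : Lh * Ldh * L = L := by rw [← hLh2, ← Matrix.mul_assoc, hkey]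
  have hright : L * Ldh * Lh = L := by
    rw [← hLh2, Matrix.mul_assoc Lh, Matrix.mul_assoc Lh, hkey]
  calc _ = ∑ S, μ.prob S • (Lh * Ldh * (μ.sketch S * L * μ.sketch S) * (Ldh * Lh)
          - Lh * Ldh * μ.sketch S * L - L * μ.sketch S * (Ldh * Lh) + L) := by
        simp only [Matrix.mul_sub_one_transpose_mul_sub_one_mul hLh_symm hLdh_symm
          (μ.sketch_transpose _), hLh2]
    _ = Lh * Ldh * (μ.Pbar ⊙ L) * (Ldh * Lh) - Lh * Ldh * L - L * (Ldh * Lh) + L :=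
        μ.sum_prob_smul_affine _ _ _ _
    _ = _ := by
      rw [μ.Ptilde_hadamard, Matrix.mul_sub, Matrix.sub_mul, Matrix.sub_mul, ← Matrix.mul_assoc L,
        hleft, hright]
      noncomm_ring
end
end

section
/- Let L be a symmetric positive semidefinite d×d real matrix and let S be a proper sampling on {1,…,d} with matrices P̄ and P̃. Then P̃ ∘ L is symmetric positive semidefinite (equivalently P̄ ∘ L ⪰ L in the Loewner order), and λmax(L) ≤ λmax(P̄ ∘ L) ≤ λmax(L) + λmax(P̃ ∘ L). -/
/-!
`P̃` is the second-moment matrix `E[(C𝟙 - 𝟙)(C𝟙 - 𝟙)ᵀ]` of the diagonal sketch `C`, which is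
unbiased (`E[C] = I`); hence `P̃` is positive semidefinite, and so is `P̃ ∘ L` by the Schur product
theorem. Since `P̄ ∘ L = L + P̃ ∘ L`, both eigenvalue bounds follow from the Rayleigh-quotient
description of `λmax`, which is monotone under adding a positive semidefinite matrix and
subadditive.
-/

open scoped BigOperators RealInnerProductSpace
open Matrix

noncomputable section

namespace Sampling

variable {d : ℕ} (μ : Sampling d)

lemma sketch_mulVec_one_apply (S : Finset (Fin d)) (j : Fin d) :
    (μ.sketch S *ᵥ 1) j = if j ∈ S then (μ.marg j)⁻¹ else 0 := by
  simp [sketch, mulVec_diagonal]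

lemma sum_prob_mul_sketch_mulVec_one (j : Fin d) :
    ∑ S, μ.prob S * (μ.sketch S *ᵥ 1) j = 1 := by
  calc ∑ S, μ.prob S * (μ.sketch S *ᵥ 1) j
        = (∑ S, if j ∈ S then μ.prob S else 0) * (μ.marg j)⁻¹ := by
        rw [Finset.sum_mul]
        refine Finset.sum_congr rfl fun S _ => ?_
        rw [sketch_mulVec_one_apply]
        split_ifs <;> simp
    _ = 1 := mul_inv_cancel₀ (μ.margPos j).ne'

lemma Pbar_apply_eq_sum (j l : Fin d) :
    μ.Pbar j l = ∑ S, μ.prob S * ((μ.sketch S *ᵥ 1) j * (μ.sketch S *ᵥ 1) l) := by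
  have hS : ∀ S : Finset (Fin d), μ.prob S * ((μ.sketch S *ᵥ 1) j * (μ.sketch S *ᵥ 1) l)
      = (if j ∈ S ∧ l ∈ S then μ.prob S else 0) / (μ.marg j * μ.marg l) := by
    intro S
    by_cases hj : j ∈ S <;> by_cases hl : l ∈ S <;>
      simp [sketch_mulVec_one_apply, hj, hl, div_eq_mul_inv, mul_comm]
  simp only [hS, ← Finset.sum_div]
  rfl

theorem Ptilde_eq_sum :
    μ.Ptilde = ∑ S, μ.prob S • vecMulVec (μ.sketch S *ᵥ 1 - 1) (μ.sketch S *ᵥ 1 - 1) := by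
  ext j l
  have expand : ∀ a b c : ℝ, c * ((a - 1) * (b - 1)) = c * (a * b) - c * a - c * b + c :=
    fun _ _ _ => by ring
  simp only [Ptilde, Matrix.sub_apply, of_apply, Pbar_apply_eq_sum, Matrix.sum_apply,
    Matrix.smul_apply, vecMulVec_apply, Pi.sub_apply, Pi.one_apply, smul_eq_mul, expand, Finset.sum_add_distrib,
    Finset.sum_sub_distrib, sum_prob_mul_sketch_mulVec_one, μ.total]
  ring

theorem posSemidef_Ptilde : μ.Ptilde.PosSemidef := by
  rw [Ptilde_eq_sum]
  exact posSemidef_sum _ fun S _ => (posSemidef_vecMulVec_self_star _).smul (μ.nonneg S)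

theorem Pbar_hadamard_eq_add (L : Matrix (Fin d) (Fin d) ℝ) :
    μ.Pbar ⊙ L = L + μ.Ptilde ⊙ L := by
  ext j l
  simp only [hadamard_apply, Ptilde, Matrix.add_apply, Matrix.sub_apply, of_apply]
  ring

end Sampling

section lambdaMax

variable {d : ℕ}

lemma lambdaMax_eq_iSup (M : Matrix (Fin d) (Fin d) ℝ) :
    lambdaMax M = ⨆ v : {v : Fin d → ℝ // v ⬝ᵥ v = 1}, v.1 ⬝ᵥ M *ᵥ v.1 := by
  unfold lambdaMax iSup
  congr 1
  ext r
  simp [eq_comm]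

lemma isCompact_dotProduct_self_eq_one : IsCompact {v : Fin d → ℝ | v ⬝ᵥ v = 1} := by
  refine Metric.isCompact_of_isClosed_isBounded (isClosed_eq (by fun_prop) continuous_const) ?_
  refine (Metric.isBounded_closedBall (x := 0) (r := 1)).subset fun v (hv : v ⬝ᵥ v = 1) => ?_
  rw [mem_closedBall_zero_iff, pi_norm_le_iff_of_nonneg zero_le_one]
  intro j
  rw [Real.norm_eq_abs, abs_le_one_iff_mul_self_le_one, ← hv]
  exact Finset.single_le_sum (f := fun i => v i * v i) (fun i _ => mul_self_nonneg _)
    (Finset.mem_univ j)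

lemma bddAbove_range_rayleigh (M : Matrix (Fin d) (Fin d) ℝ) :
    BddAbove (Set.range fun v : {v : Fin d → ℝ // v ⬝ᵥ v = 1} => v.1 ⬝ᵥ M *ᵥ v.1) := by
  have : CompactSpace {v : Fin d → ℝ // v ⬝ᵥ v = 1} :=
    isCompact_iff_compactSpace.mp isCompact_dotProduct_self_eq_one
  exact (isCompact_range (by fun_prop)).bddAbove

lemma lambdaMax_le_lambdaMax_add_of_posSemidef {A B : Matrix (Fin d) (Fin d) ℝ}
    (hB : B.PosSemidef) :
    lambdaMax A ≤ lambdaMax (A + B) := by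
  simp only [lambdaMax_eq_iSup]
  refine ciSup_mono (bddAbove_range_rayleigh _) fun v => ?_
  simpa [add_mulVec] using hB.dotProduct_mulVec_nonneg v.1

lemma lambdaMax_add_le (A B : Matrix (Fin d) (Fin d) ℝ) :
    lambdaMax (A + B) ≤ lambdaMax A + lambdaMax B := by
  simp only [lambdaMax_eq_iSup]
  rcases isEmpty_or_nonempty {v : Fin d → ℝ // v ⬝ᵥ v = 1} with hempty | hne
  · -- only for `d = 0`, where every `lambdaMax` is the junk value `sSup ∅ = 0`
    simp [Real.iSup_of_isEmpty]
  · refine ciSup_le fun v => ?_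
    rw [add_mulVec, dotProduct_add]
    exact add_le_add (le_ciSup (bddAbove_range_rayleigh A) v)
      (le_ciSup (bddAbove_range_rayleigh B) v)

end lambdaMax

/-- for symmetric PSD `L`, `P̃ ∘ L` is PSD (equivalently `P̄ ∘ L ⪰ L`),
and `λmax(L) ≤ λmax(P̄ ∘ L) ≤ λmax(L) + λmax(P̃ ∘ L)`. -/
theorem statement3 {d : ℕ} (μ : Sampling d) (L : Matrix (Fin d) (Fin d) ℝ)
    (hL : L.PosSemidef) :
    (Matrix.hadamard μ.Ptilde L).PosSemidef ∧
    (Matrix.hadamard μ.Pbar L - L).PosSemidef ∧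
    lambdaMax L ≤ lambdaMax (Matrix.hadamard μ.Pbar L) ∧
    lambdaMax (Matrix.hadamard μ.Pbar L)
      ≤ lambdaMax L + lambdaMax (Matrix.hadamard μ.Ptilde L) := by
  have hPtilde : (μ.Ptilde ⊙ L).PosSemidef := μ.posSemidef_Ptilde.hadamard hL
  rw [μ.Pbar_hadamard_eq_add L, add_sub_cancel_left]
  exact ⟨hPtilde, hPtilde, lambdaMax_le_lambdaMax_add_of_posSemidef hPtilde, lambdaMax_add_le _ _⟩

end
end

section
/- Let L be a symmetric positive semidefinite d×d real matrix and let S be a proper sampling on {1,…,d} with probability matrix P and marginals p. Over all vectors v ∈ ℝ^d with positive entries satisfying the ESO inequality P ∘ L ⪯ Diag(p ∘ v) (where (p ∘ v)_j = p_j v_j and ⪯ is the Loewner order), the minimum of max_{1≤j≤d} v_j/p_j equals λmax(P̄ ∘ L); moreover the vector v with v_j = λmax(P̄ ∘ L)·p_j satisfies the ESO inequality and attains this minimum (assuming L ≠ 0 so that λmax(P̄ ∘ L) > 0). -/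
open scoped BigOperators RealInnerProductSpace
open Matrix

noncomputable section

/-!
Conjugating by `Diag(p)` turns the ESO inequality `P ∘ L ⪯ Diag(p ∘ v)` into
`P̄ ∘ L ⪯ Diag(v / p)`, because `P ∘ L = Diag(p) (P̄ ∘ L) Diag(p)`. A symmetric matrix `A` satisfies
`A ⪯ Diag(w)` for `w` constant equal to `λmax(A)`, and `A ⪯ Diag(w)` forces `λmax(A) ≤ max_j w_j`
by evaluating the Rayleigh quotient. Positivity of `λmax(P̄ ∘ L)` comes from a positive diagonal
entry `L_jj / p_j` of `P̄ ∘ L`.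
-/

lemma Matrix.PosSemidef.exists_diag_pos {n : Type*} [Fintype n] {A : Matrix n n ℝ}
    (hA : A.PosSemidef) (h0 : A ≠ 0) : ∃ j, 0 < A j j := by
  by_contra! h
  exact h0 <| hA.trace_eq_zero_iff.mp <|
    Finset.sum_eq_zero fun j _ => le_antisymm (h j) hA.diag_nonneg

lemma Matrix.posSemidef_diagonal_mul_sub_conj_iff {n : Type*} [Fintype n] [DecidableEq n]
    {p : n → ℝ} (hp : ∀ j, p j ≠ 0) (v : n → ℝ) (A : Matrix n n ℝ) :
    (diagonal (fun j => p j * v j) - diagonal p * A * diagonal p).PosSemidef ↔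
      (diagonal (fun j => v j / p j) - A).PosSemidef := by
  have hU : IsUnit (diagonal p) := isUnit_diagonal.mpr (Pi.isUnit_iff.mpr fun j => (hp j).isUnit)
  have hconj : diagonal (fun j => p j * v j) - diagonal p * A * diagonal p =
      diagonal p * (diagonal (fun j => v j / p j) - A) * star (diagonal p) := by
    rw [star_eq_conjTranspose, diagonal_conjTranspose, star_trivial, mul_sub, sub_mul,
      diagonal_mul_diagonal, diagonal_mul_diagonal]
    congr 2
    funext j
    field_simp [hp j]
  rw [hconj, hU.posSemidef_star_right_conjugate_iff]

lemma abs_le_one_of_dotProduct_self_eq_one {n : Type*} [Fintype n] {v : n → ℝ}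
    (hv : v ⬝ᵥ v = 1) (j : n) : |v j| ≤ 1 := by
  have hj : v j * v j ≤ v ⬝ᵥ v :=
    Finset.single_le_sum (f := fun i => v i * v i) (fun i _ => mul_self_nonneg _)
      (Finset.mem_univ j)
  rw [hv, ← abs_mul_abs_self] at hj
  nlinarith [abs_nonneg (v j)]

section Rayleigh

variable {d : ℕ}

lemma bddAbove_rayleigh (M : Matrix (Fin d) (Fin d) ℝ) :
    BddAbove {r : ℝ | ∃ v : Fin d → ℝ, v ⬝ᵥ v = 1 ∧ r = v ⬝ᵥ M *ᵥ v} := by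
  refine ⟨∑ j, ∑ l, |M j l|, ?_⟩
  rintro r ⟨v, hv, rfl⟩
  have hexp : v ⬝ᵥ M *ᵥ v = ∑ j, ∑ l, v j * M j l * v l := by
    simp only [dotProduct, mulVec, Finset.mul_sum, mul_assoc]
  rw [hexp]
  refine Finset.sum_le_sum fun j _ => Finset.sum_le_sum fun l _ => ?_
  calc v j * M j l * v l ≤ |v j| * |M j l| * |v l| := by
        rw [← abs_mul, ← abs_mul]; exact le_abs_self _
    _ ≤ 1 * |M j l| * 1 := by
        gcongr
        exacts [abs_le_one_of_dotProduct_self_eq_one hv j,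
          abs_le_one_of_dotProduct_self_eq_one hv l]
    _ = |M j l| := by ring

lemma dotProduct_mulVec_le_lambdaMax (M : Matrix (Fin d) (Fin d) ℝ) {v : Fin d → ℝ}
    (hv : v ⬝ᵥ v = 1) : v ⬝ᵥ M *ᵥ v ≤ lambdaMax M :=
  le_csSup (bddAbove_rayleigh M) ⟨v, hv, rfl⟩

lemma diag_le_lambdaMax (M : Matrix (Fin d) (Fin d) ℝ) (j : Fin d) : M j j ≤ lambdaMax M := by
  simpa [mulVec_single, dotProduct_single] using
    dotProduct_mulVec_le_lambdaMax M (v := Pi.single j 1) (by simp [dotProduct_single])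

lemma dotProduct_mulVec_le_lambdaMax_mul (M : Matrix (Fin d) (Fin d) ℝ) (y : Fin d → ℝ) :
    y ⬝ᵥ M *ᵥ y ≤ lambdaMax M * (y ⬝ᵥ y) := by
  rcases eq_or_ne y 0 with rfl | hy
  · simp
  have hyy : 0 < y ⬝ᵥ y := by simpa using dotProduct_self_star_pos_iff.mpr hy
  set c := Real.sqrt (y ⬝ᵥ y)
  have hc : 0 < c := Real.sqrt_pos.mpr hyy
  have hcc : c * c = y ⬝ᵥ y := Real.mul_self_sqrt hyy.le
  have hunit : (c⁻¹ • y) ⬝ᵥ (c⁻¹ • y) = 1 := by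
    rw [smul_dotProduct, dotProduct_smul, smul_eq_mul, smul_eq_mul, ← hcc]
    field_simp
  have h := dotProduct_mulVec_le_lambdaMax M hunit
  rw [mulVec_smul, smul_dotProduct, dotProduct_smul, smul_eq_mul, smul_eq_mul] at h
  calc y ⬝ᵥ M *ᵥ y = (c * c) * (c⁻¹ * (c⁻¹ * (y ⬝ᵥ M *ᵥ y))) := by field_simp
    _ ≤ (c * c) * lambdaMax M := by gcongr
    _ = lambdaMax M * (y ⬝ᵥ y) := by rw [hcc, mul_comm]

lemma lambdaMax_le [Nonempty (Fin d)] (M : Matrix (Fin d) (Fin d) ℝ) {c : ℝ}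
    (h : ∀ v : Fin d → ℝ, v ⬝ᵥ v = 1 → v ⬝ᵥ M *ᵥ v ≤ c) :
    lambdaMax M ≤ c := by
  obtain ⟨j⟩ := ‹Nonempty (Fin d)›
  refine csSup_le ⟨_, Pi.single j 1, by simp [dotProduct_single], rfl⟩ ?_
  rintro r ⟨v, hv, rfl⟩
  exact h v hv

lemma posSemidef_diagonal_lambdaMax_sub {A : Matrix (Fin d) (Fin d) ℝ} (hA : A.IsHermitian) :
    (diagonal (fun _ => lambdaMax A) - A).PosSemidef := by
  refine posSemidef_iff_dotProduct_mulVec.mpr ⟨(isHermitian_diagonal _).sub hA, fun x => ?_⟩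
  rw [star_trivial, sub_mulVec, dotProduct_sub, sub_nonneg]
  calc x ⬝ᵥ A *ᵥ x ≤ lambdaMax A * (x ⬝ᵥ x) := dotProduct_mulVec_le_lambdaMax_mul A x
    _ = x ⬝ᵥ diagonal (fun _ => lambdaMax A) *ᵥ x := by
        simp only [dotProduct, mulVec_diagonal, Finset.mul_sum, mul_left_comm]

lemma lambdaMax_le_iSup_of_posSemidef_diagonal_sub [Nonempty (Fin d)]
    {A : Matrix (Fin d) (Fin d) ℝ} {w : Fin d → ℝ} (h : (diagonal w - A).PosSemidef) :
    lambdaMax A ≤ ⨆ j, w j := by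
  refine lambdaMax_le A fun u hu => ?_
  have hdiag := (posSemidef_iff_dotProduct_mulVec.mp h).2 u
  rw [star_trivial, sub_mulVec, dotProduct_sub, sub_nonneg] at hdiag
  calc u ⬝ᵥ A *ᵥ u ≤ ∑ j, w j * (u j * u j) := by
        simpa only [dotProduct, mulVec_diagonal, mul_left_comm] using hdiag
    _ ≤ ∑ j, (⨆ i, w i) * (u j * u j) := by
        gcongr with j
        · exact mul_self_nonneg _
        · exact le_ciSup (Set.finite_range w).bddAbove j
    _ = ⨆ i, w i := by rw [← Finset.mul_sum, show ∑ j, u j * u j = 1 from hu, mul_one]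

end Rayleigh

namespace Sampling

variable {d : ℕ} (μ : Sampling d)

lemma marg_ne_zero (j : Fin d) : μ.marg j ≠ 0 := (μ.margPos j).ne'

lemma Pbar_apply_self (j : Fin d) : μ.Pbar j j = (μ.marg j)⁻¹ := by
  have hjj : μ.probMatrix j j = μ.marg j := by simp [probMatrix, marg]
  rw [Pbar, of_apply, hjj, div_mul_cancel_left₀ (μ.marg_ne_zero j)]

lemma Pbar_isHermitian : μ.Pbar.IsHermitian := by
  ext j l
  simp only [conjTranspose_apply, star_trivial, Pbar, probMatrix, of_apply, and_comm, mul_comm]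

lemma hadamard_probMatrix (L : Matrix (Fin d) (Fin d) ℝ) :
    μ.probMatrix ⊙ L = diagonal μ.marg * (μ.Pbar ⊙ L) * diagonal μ.marg := by
  ext j l
  rw [mul_diagonal, diagonal_mul, hadamard_apply, hadamard_apply, Pbar, of_apply]
  field_simp [μ.marg_ne_zero j, μ.marg_ne_zero l]

end Sampling

theorem statement4_general {d : ℕ} (μ : Sampling d)
    (L : Matrix (Fin d) (Fin d) ℝ) (hL : L.PosSemidef) (hL0 : L ≠ 0) :
    0 < lambdaMax (Matrix.hadamard μ.Pbar L) ∧
    (Matrix.diagonal (fun j => μ.marg j * (lambdaMax (Matrix.hadamard μ.Pbar L) * μ.marg j))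
        - Matrix.hadamard μ.probMatrix L).PosSemidef ∧
    (⨆ j : Fin d, lambdaMax (Matrix.hadamard μ.Pbar L) * μ.marg j / μ.marg j)
      = lambdaMax (Matrix.hadamard μ.Pbar L) ∧
    ∀ v : Fin d → ℝ, (∀ j, 0 < v j) →
      (Matrix.diagonal (fun j => μ.marg j * v j) - Matrix.hadamard μ.probMatrix L).PosSemidef →
      lambdaMax (Matrix.hadamard μ.Pbar L) ≤ ⨆ j : Fin d, v j / μ.marg j := by
  obtain ⟨j₀, hj₀⟩ := hL.exists_diag_pos hL0
  have : Nonempty (Fin d) := ⟨j₀⟩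
  have hcancel (c : ℝ) (j : Fin d) : c * μ.marg j / μ.marg j = c :=
    mul_div_cancel_right₀ c (μ.marg_ne_zero j)
  have hpos : 0 < (μ.Pbar ⊙ L) j₀ j₀ := by
    rw [hadamard_apply, μ.Pbar_apply_self]
    exact mul_pos (inv_pos.mpr (μ.margPos j₀)) hj₀
  refine ⟨hpos.trans_le (diag_le_lambdaMax _ j₀), ?_, by simp only [hcancel, ciSup_const],
    fun v _ hv => ?_⟩
  · rw [μ.hadamard_probMatrix, posSemidef_diagonal_mul_sub_conj_iff μ.marg_ne_zero]
    simpa only [hcancel] using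
      posSemidef_diagonal_lambdaMax_sub (μ.Pbar_isHermitian.hadamard hL.isHermitian)
  · rw [μ.hadamard_probMatrix, posSemidef_diagonal_mul_sub_conj_iff μ.marg_ne_zero] at hv
    exact lambdaMax_le_iSup_of_posSemidef_diagonal_sub hv

/-- over all positive vectors `v` satisfying the ESO inequality
`P ∘ L ⪯ Diag(p ∘ v)`, the minimum of `max_j v_j/p_j` equals `λmax(P̄ ∘ L)`;
the vector `v_j = λmax(P̄ ∘ L)·p_j` is feasible and attains it (with `L ≠ 0`,
so `λmax(P̄ ∘ L) > 0`, making this `v` positive). -/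
theorem statement4 {d : ℕ} (hd : 0 < d) (μ : Sampling d)
    (L : Matrix (Fin d) (Fin d) ℝ) (hL : L.PosSemidef) (hL0 : L ≠ 0) :
    0 < lambdaMax (Matrix.hadamard μ.Pbar L) ∧
    (Matrix.diagonal (fun j => μ.marg j * (lambdaMax (Matrix.hadamard μ.Pbar L) * μ.marg j))
        - Matrix.hadamard μ.probMatrix L).PosSemidef ∧
    (⨆ j : Fin d, lambdaMax (Matrix.hadamard μ.Pbar L) * μ.marg j / μ.marg j)
      = lambdaMax (Matrix.hadamard μ.Pbar L) ∧
    ∀ v : Fin d → ℝ, (∀ j, 0 < v j) →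
      (Matrix.diagonal (fun j => μ.marg j * v j) - Matrix.hadamard μ.probMatrix L).PosSemidef →
      lambdaMax (Matrix.hadamard μ.Pbar L) ≤ ⨆ j : Fin d, v j / μ.marg j :=
  statement4_general μ L hL hL0
end
end

section
/- Let f : ℝ^d → ℝ be differentiable, convex, 𝐋-smooth for a nonzero symmetric positive semidefinite matrix 𝐋, and μ-strongly convex with μ > 0, and let x* be its minimizer. Let S be a proper sampling with sketch C, let 0 < γ ≤ 1/λmax(P̄ ∘ 𝐋), and define random iterates by a fixed x^0 ∈ ℝ^d and x^{k+1} = x^k − γ C_k ∇f(x^k), where C_0, C_1, … are independent copies of the sketch C. Then for every k ≥ 0, E[f(x^k)] − f(x*) ≤ (1 − γμ)^k (f(x^0) − f(x*)). -/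
/-!
The sketch is unbiased, `E[C] = I`, and `E[(Cg)ᵀ 𝐋 (Cg)] = gᵀ (P̄ ∘ 𝐋) g`. Averaging the
`𝐋`-smoothness inequality at `x⁺ = x - γ C ∇f(x)` over the sketch therefore gives
`E f(x⁺) ≤ f(x) - (γ/2) ‖∇f(x)‖²` as soon as `γ λmax(P̄ ∘ 𝐋) ≤ 1`, and the Polyak–Łojasiewicz
inequality `‖∇f(x)‖² ≥ 2μ (f(x) - f(x*))` implied by strong convexity turns this into a
contraction of `E f - f(x*)` by `1 - γμ` per independent draw. That factor is nonnegative
because `μ ‖u‖² ≤ uᵀ 𝐋 u ≤ uᵀ (P̄ ∘ 𝐋) u ≤ λmax ‖u‖²`, the middle inequality being the variance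
identity `uᵀ (P̄ ∘ 𝐋) u - uᵀ 𝐋 u = E[((C - I)u)ᵀ 𝐋 ((C - I)u)] ≥ 0`.
-/

open scoped BigOperators RealInnerProductSpace
open Matrix

noncomputable section

section Quadratic

variable {d : ℕ}

lemma quad_eq_dotProduct (M : Matrix (Fin d) (Fin d) ℝ) (x : Vec d) :
    quad M x = x.ofLp ⬝ᵥ M *ᵥ x.ofLp := by
  simp [quad, mact, EuclideanSpace.inner_eq_star_dotProduct, dotProduct_comm]

lemma norm_sq_eq_dotProduct (x : Vec d) : ‖x‖ ^ 2 = x.ofLp ⬝ᵥ x.ofLp := by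
  rw [← real_inner_self_eq_norm_sq, EuclideanSpace.inner_eq_star_dotProduct]
  simp

lemma quad_smul (M : Matrix (Fin d) (Fin d) ℝ) (c : ℝ) (x : Vec d) :
    quad M (c • x) = c ^ 2 * quad M x := by
  simp only [quad, mact, map_smul, real_inner_smul_left, real_inner_smul_right]
  ring

lemma quad_zero (M : Matrix (Fin d) (Fin d) ℝ) : quad M 0 = 0 := by
  simp [quad]

lemma quad_nonneg {M : Matrix (Fin d) (Fin d) ℝ} (hM : M.PosSemidef) (x : Vec d) :
    0 ≤ quad M x := by
  simpa [quad_eq_dotProduct] using hM.dotProduct_mulVec_nonneg x.ofLp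

lemma sum_mul_quad_sub_mean {Ω : Type*} [Fintype Ω] {p : Ω → ℝ} (hp : ∑ ω, p ω = 1)
    (M : Matrix (Fin d) (Fin d) ℝ) (X : Ω → Vec d) {m : Vec d} (hm : ∑ ω, p ω • X ω = m) :
    ∑ ω, p ω * quad M (X ω - m) = ∑ ω, p ω * quad M (X ω) - quad M m := by
  have hexpand : ∀ ω, quad M (X ω - m)
      = quad M (X ω) - ⟪X ω, mact M m⟫ - ⟪m, mact M (X ω)⟫ + quad M m := fun ω => by
    simp only [quad, mact, map_sub, inner_sub_left, inner_sub_right]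
    ring
  have hleft : ∑ ω, p ω * ⟪X ω, mact M m⟫ = quad M m := by
    simp only [← real_inner_smul_left, ← sum_inner, hm, quad]
  have hright : ∑ ω, p ω * ⟪m, mact M (X ω)⟫ = quad M m := by
    simp only [← real_inner_smul_right, ← inner_sum, quad, mact, ← map_smul, ← map_sum, hm]
  simp only [hexpand, mul_add, mul_sub, Finset.sum_add_distrib, Finset.sum_sub_distrib, hleft,
    hright, ← Finset.sum_mul, hp]
  ring

lemma norm_toLp_eq_one {v : Fin d → ℝ} (hv : v ⬝ᵥ v = 1) : ‖WithLp.toLp 2 v‖ = 1 := by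
  rw [← pow_eq_one_iff_of_nonneg (norm_nonneg _) two_ne_zero, norm_sq_eq_dotProduct]
  exact hv

lemma quad_le_lambdaMax_of_norm_eq_one (M : Matrix (Fin d) (Fin d) ℝ) {x : Vec d}
    (hx : ‖x‖ = 1) : quad M x ≤ lambdaMax M := by
  refine le_csSup (bddAbove_rayleigh M) ⟨x.ofLp, ?_, quad_eq_dotProduct M x⟩
  rw [← norm_sq_eq_dotProduct, hx, one_pow]

lemma quad_le_lambdaMax_mul_norm_sq (M : Matrix (Fin d) (Fin d) ℝ) (x : Vec d) :
    quad M x ≤ lambdaMax M * ‖x‖ ^ 2 := by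
  rcases eq_or_ne x 0 with rfl | hx
  · simp [quad_zero]
  have hnx : ‖x‖ ≠ 0 := norm_ne_zero_iff.2 hx
  have hunit : ‖‖x‖⁻¹ • x‖ = 1 := by
    rw [norm_smul, norm_inv, norm_norm, inv_mul_cancel₀ hnx]
  calc quad M x = ‖x‖ ^ 2 * quad M (‖x‖⁻¹ • x) := by
        rw [quad_smul, ← mul_assoc, ← mul_pow, mul_inv_cancel₀ hnx, one_pow, one_mul]
    _ ≤ ‖x‖ ^ 2 * lambdaMax M :=
        mul_le_mul_of_nonneg_left (quad_le_lambdaMax_of_norm_eq_one M hunit) (sq_nonneg _)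
    _ = lambdaMax M * ‖x‖ ^ 2 := mul_comm _ _

lemma le_lambdaMax_of_forall_le_quad {M : Matrix (Fin d) (Fin d) ℝ} {c : ℝ}
    (h : ∀ x : Vec d, c * ‖x‖ ^ 2 ≤ quad M x) (hM : 0 < lambdaMax M) : c ≤ lambdaMax M := by
  -- `sSup ∅ = 0`, so a positive `lambdaMax M` needs a unit vector (in particular `d ≠ 0`)
  obtain ⟨x, hx⟩ : ∃ x : Vec d, ‖x‖ = 1 := by
    by_contra hnone
    have hempty : {r : ℝ | ∃ v : Fin d → ℝ, v ⬝ᵥ v = 1 ∧ r = v ⬝ᵥ M *ᵥ v} = ∅ :=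
      Set.eq_empty_of_forall_notMem fun r ⟨v, hv, _⟩ =>
        hnone ⟨WithLp.toLp 2 v, norm_toLp_eq_one hv⟩
    simp [lambdaMax, hempty] at hM
  calc c = c * ‖x‖ ^ 2 := by rw [hx, one_pow, mul_one]
    _ ≤ quad M x := h x
    _ ≤ lambdaMax M := quad_le_lambdaMax_of_norm_eq_one M hx

end Quadratic

namespace Sampling

variable {d : ℕ} (μ : Sampling d)

def weight (S : Finset (Fin d)) (j : Fin d) : ℝ := if j ∈ S then (μ.marg j)⁻¹ else 0

lemma mact_sketch_apply (S : Finset (Fin d)) (y : Vec d) (j : Fin d) :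
    mact (μ.sketch S) y j = μ.weight S j * y j := by
  simp [mact, sketch, weight, mulVec_diagonal]

lemma sum_prob_mul_weight (j : Fin d) : ∑ S, μ.prob S * μ.weight S j = 1 := by
  have hterm : ∀ S,
      μ.prob S * μ.weight S j = (if j ∈ S then μ.prob S else 0) * (μ.marg j)⁻¹ := by
    intro S; unfold weight; split_ifs <;> simp
  simp only [hterm, ← Finset.sum_mul]
  exact mul_inv_cancel₀ (μ.margPos j).ne'

lemma sum_prob_mul_weight_mul_weight (j l : Fin d) :
    ∑ S, μ.prob S * μ.weight S j * μ.weight S l = μ.Pbar j l := by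
  have hterm : ∀ S, μ.prob S * μ.weight S j * μ.weight S l
      = (if j ∈ S ∧ l ∈ S then μ.prob S else 0) * ((μ.marg j)⁻¹ * (μ.marg l)⁻¹) := by
    intro S; unfold weight; split_ifs <;> simp_all [mul_assoc]
  simp only [hterm, ← Finset.sum_mul, Pbar, probMatrix, of_apply, div_eq_mul_inv, mul_inv]

lemma sum_prob_smul_mact_sketch (y : Vec d) : ∑ S, μ.prob S • mact (μ.sketch S) y = y := by
  ext j
  simp only [WithLp.ofLp_sum, WithLp.ofLp_smul, Finset.sum_apply, Pi.smul_apply, smul_eq_mul,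
    mact_sketch_apply, ← mul_assoc, ← Finset.sum_mul, sum_prob_mul_weight, one_mul]

lemma sum_prob_mul_quad_mact_sketch (L : Matrix (Fin d) (Fin d) ℝ) (g : Vec d) :
    ∑ S, μ.prob S * quad L (mact (μ.sketch S) g) = quad (μ.Pbar ⊙ L) g := by
  have hterm : ∀ S, quad L (mact (μ.sketch S) g)
      = ∑ j, ∑ l, μ.weight S j * μ.weight S l * (g j * L j l * g l) := fun S => by
    simp only [quad_eq_dotProduct, dotProduct, mulVec, Finset.mul_sum, mact_sketch_apply]
    exact Finset.sum_congr rfl fun j _ => Finset.sum_congr rfl fun l _ => by ring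
  simp_rw [hterm, Finset.mul_sum]
  rw [Finset.sum_comm, quad_eq_dotProduct]
  refine Finset.sum_congr rfl fun j _ => ?_
  rw [Finset.sum_comm, mulVec, dotProduct, Finset.mul_sum]
  refine Finset.sum_congr rfl fun l _ => ?_
  rw [hadamard_apply, ← sum_prob_mul_weight_mul_weight, Finset.sum_mul, Finset.sum_mul,
    Finset.mul_sum]
  exact Finset.sum_congr rfl fun S _ => by ring

lemma quad_le_quad_hadamard_Pbar {L : Matrix (Fin d) (Fin d) ℝ} (hL : L.PosSemidef) (g : Vec d) :
    quad L g ≤ quad (μ.Pbar ⊙ L) g := by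
  have hvar := sum_mul_quad_sub_mean μ.total L (fun S => mact (μ.sketch S) g)
    (μ.sum_prob_smul_mact_sketch g)
  rw [sum_prob_mul_quad_mact_sketch] at hvar
  rw [← sub_nonneg, ← hvar]
  exact Finset.sum_nonneg fun S _ => mul_nonneg (μ.nonneg S) (quad_nonneg hL _)

lemma sum_prob_mul_sketch_step_le {f : Vec d → ℝ} {L : Matrix (Fin d) (Fin d) ℝ}
    (hsmooth : MSmooth f L) {γ : ℝ} (hγ : 0 ≤ γ) (hγL : γ * lambdaMax (μ.Pbar ⊙ L) ≤ 1)
    (x : Vec d) :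
    ∑ S, μ.prob S * f (x - γ • mact (μ.sketch S) (gradient f x))
      ≤ f x - γ / 2 * ‖gradient f x‖ ^ 2 := by
  set g := gradient f x
  have hpoint : ∀ S, f (x - γ • mact (μ.sketch S) g)
      ≤ f x - γ * ⟪g, mact (μ.sketch S) g⟫ + γ ^ 2 / 2 * quad L (mact (μ.sketch S) g) := by
    intro S
    have h := hsmooth (x - γ • mact (μ.sketch S) g) x
    rw [sub_sub_cancel_left, ← neg_smul, quad_smul, real_inner_smul_right, neg_sq] at h
    linarith
  have hinner : ∑ S, μ.prob S * ⟪g, mact (μ.sketch S) g⟫ = ‖g‖ ^ 2 := by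
    simp only [← real_inner_smul_right, ← inner_sum, sum_prob_smul_mact_sketch,
      real_inner_self_eq_norm_sq]
  have hquad : γ * quad (μ.Pbar ⊙ L) g ≤ ‖g‖ ^ 2 :=
    calc γ * quad (μ.Pbar ⊙ L) g ≤ γ * (lambdaMax (μ.Pbar ⊙ L) * ‖g‖ ^ 2) :=
          mul_le_mul_of_nonneg_left (quad_le_lambdaMax_mul_norm_sq _ g) hγ
      _ = γ * lambdaMax (μ.Pbar ⊙ L) * ‖g‖ ^ 2 := (mul_assoc _ _ _).symm
      _ ≤ ‖g‖ ^ 2 := mul_le_of_le_one_left (sq_nonneg _) hγL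
  calc ∑ S, μ.prob S * f (x - γ • mact (μ.sketch S) g)
      ≤ ∑ S, μ.prob S * (f x - γ * ⟪g, mact (μ.sketch S) g⟫
          + γ ^ 2 / 2 * quad L (mact (μ.sketch S) g)) :=
        Finset.sum_le_sum fun S _ => mul_le_mul_of_nonneg_left (hpoint S) (μ.nonneg S)
    _ = f x - γ * ‖g‖ ^ 2 + γ ^ 2 / 2 * quad (μ.Pbar ⊙ L) g := by
        simp only [mul_add, mul_sub, Finset.sum_add_distrib, Finset.sum_sub_distrib,
          ← Finset.sum_mul, μ.total, one_mul, mul_left_comm (μ.prob _), ← Finset.mul_sum,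
          hinner, sum_prob_mul_quad_mact_sketch]
    _ ≤ f x - γ / 2 * ‖g‖ ^ 2 := by
        linarith [mul_le_mul_of_nonneg_left hquad (div_nonneg hγ zero_le_two)]

end Sampling

section StronglyConvex

variable {d : ℕ} {f : Vec d → ℝ} {mu : ℝ}

lemma mul_norm_sq_le_quad_of_mSmooth {M : Matrix (Fin d) (Fin d) ℝ} (hsmooth : MSmooth f M)
    (hsc : ∀ x y : Vec d, f y + ⟪gradient f y, x - y⟫ + mu / 2 * ‖x - y‖ ^ 2 ≤ f x) (u : Vec d) :
    mu * ‖u‖ ^ 2 ≤ quad M u := by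
  have hlower := hsc u 0
  have hupper := hsmooth u 0
  rw [sub_zero] at hlower hupper
  linarith

lemma two_mul_sub_le_norm_gradient_sq (hmu : 0 ≤ mu)
    (hsc : ∀ x y : Vec d, f y + ⟪gradient f y, x - y⟫ + mu / 2 * ‖x - y‖ ^ 2 ≤ f x)
    (x y : Vec d) : 2 * mu * (f x - f y) ≤ ‖gradient f x‖ ^ 2 := by
  have hlower := hsc y x
  have hcs := neg_le_of_abs_le (abs_real_inner_le_norm (gradient f x) (y - x))
  nlinarith [sq_nonneg (‖gradient f x‖ - mu * ‖y - x‖), norm_nonneg (y - x)]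

end StronglyConvex

section Trajectory

variable {V Ω : Type*} [Fintype Ω] {P : Ω → ℝ} {x0 : V} {step : V → Ω → V}

lemma trajExp_succ (φ : V → ℝ) (k : ℕ) :
    trajExp P x0 step φ (k + 1) = trajExp P x0 step (fun x => ∑ s, P s * φ (step x s)) k := by
  rw [trajExp, ← (Fin.snocEquiv fun _ => Ω).sum_comp, Fintype.sum_prod_type, Finset.sum_comm]
  simp only [Fin.snocEquiv_apply, traj, Fin.snoc_castSucc, Fin.snoc_last,
    Fin.prod_univ_castSucc, trajExp, Finset.mul_sum]
  exact Finset.sum_congr rfl fun ω _ => Finset.sum_congr rfl fun s _ => by ring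

lemma trajExp_mono (hP : ∀ s, 0 ≤ P s) {φ ψ : V → ℝ} (h : ∀ x, φ x ≤ ψ x) (k : ℕ) :
    trajExp P x0 step φ k ≤ trajExp P x0 step ψ k :=
  Finset.sum_le_sum fun ω _ =>
    mul_le_mul_of_nonneg_left (h _) (Finset.prod_nonneg fun i _ => hP (ω i))

lemma trajExp_affine (hP : ∑ s, P s = 1) (φ : V → ℝ) (a ρ : ℝ) (k : ℕ) :
    trajExp P x0 step (fun x => a + ρ * (φ x - a)) k = a + ρ * (trajExp P x0 step φ k - a) := by
  have hmass : ∑ ω : Fin k → Ω, ∏ i, P (ω i) = 1 := by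
    rw [← Fintype.prod_sum (fun _ : Fin k => P), hP, Finset.prod_const_one]
  have hterm : ∀ ω : Fin k → Ω, (∏ i, P (ω i)) * (a + ρ * (φ (traj x0 step k ω) - a))
      = (1 - ρ) * a * ∏ i, P (ω i) + ρ * ((∏ i, P (ω i)) * φ (traj x0 step k ω)) := fun ω => by
    ring
  simp only [trajExp, hterm, Finset.sum_add_distrib, ← Finset.mul_sum, hmass]
  ring

lemma trajExp_sub_le_pow_mul (hP0 : ∀ s, 0 ≤ P s) (hP : ∑ s, P s = 1) {φ : V → ℝ}
    {a ρ : ℝ} (hρ : 0 ≤ ρ) (hstep : ∀ x, ∑ s, P s * φ (step x s) - a ≤ ρ * (φ x - a)) :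
    ∀ k, trajExp P x0 step φ k - a ≤ ρ ^ k * (φ x0 - a)
  | 0 => by simp [trajExp, traj]
  | k + 1 => by
    have hcontract := trajExp_mono (x0 := x0) (step := step) hP0
      (fun x => sub_le_iff_le_add'.1 (hstep x)) k
    rw [trajExp_affine hP] at hcontract
    rw [trajExp_succ, pow_succ', mul_assoc]
    have := mul_le_mul_of_nonneg_left (trajExp_sub_le_pow_mul hP0 hP hρ hstep k) hρ
    linarith

end Trajectory

theorem statement5_general {d : ℕ} (μsamp : Sampling d) (f : Vec d → ℝ)
    (LL : Matrix (Fin d) (Fin d) ℝ) (hLL : LL.PosSemidef)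
    (hsmooth : MSmooth f LL) (mu : ℝ) (hmu : 0 < mu)
    (hsc : ∀ x y : Vec d, f y + ⟪gradient f y, x - y⟫ + mu / 2 * ‖x - y‖ ^ 2 ≤ f x)
    (xstar : Vec d)
    (γ : ℝ) (hγ : 0 < γ) (hγ' : γ ≤ 1 / lambdaMax (Matrix.hadamard μsamp.Pbar LL))
    (x0 : Vec d) :
    ∀ k : ℕ,
      trajExp μsamp.prob x0 (fun x S => x - γ • mact (μsamp.sketch S) (gradient f x)) f k
          - f xstar
        ≤ (1 - γ * mu) ^ k * (f x0 - f xstar) := by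
  have hlam : 0 < lambdaMax (μsamp.Pbar ⊙ LL) := by
    by_contra! hlam
    linarith [one_div_nonpos.2 hlam]
  have hγlam : γ * lambdaMax (μsamp.Pbar ⊙ LL) ≤ 1 := (le_div_iff₀ hlam).1 hγ'
  have hmulam : mu ≤ lambdaMax (μsamp.Pbar ⊙ LL) :=
    le_lambdaMax_of_forall_le_quad (fun u => (mul_norm_sq_le_quad_of_mSmooth hsmooth hsc u).trans
      (μsamp.quad_le_quad_hadamard_Pbar hLL u)) hlam
  have hγmu : γ * mu ≤ 1 := (mul_le_mul_of_nonneg_left hmulam hγ.le).trans hγlam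
  refine trajExp_sub_le_pow_mul μsamp.nonneg μsamp.total (by linarith) fun x => ?_
  have hdescent := μsamp.sum_prob_mul_sketch_step_le hsmooth hγ.le hγlam x
  have hpl := two_mul_sub_le_norm_gradient_sq hmu.le hsc x xstar
  linarith [mul_le_mul_of_nonneg_left hpl hγ.le]

/-- SkGD convergence. For `f` differentiable, convex, `𝐋`-smooth (`𝐋 ≠ 0` PSD)
and `μ`-strongly convex with minimizer `x*`, step size `0 < γ ≤ 1/λmax(P̄ ∘ 𝐋)`, and iterates
`x^{k+1} = x^k − γ C_k ∇f(x^k)` with i.i.d. sketches, one has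
`E[f(x^k)] − f(x*) ≤ (1 − γμ)^k (f(x^0) − f(x*))`. -/
theorem statement5 {d : ℕ} (μsamp : Sampling d) (f : Vec d → ℝ)
    (LL : Matrix (Fin d) (Fin d) ℝ) (hLL : LL.PosSemidef) (hLL0 : LL ≠ 0)
    (hdiff : Differentiable ℝ f) (hconv : ConvexOn ℝ Set.univ f)
    (hsmooth : MSmooth f LL) (mu : ℝ) (hmu : 0 < mu)
    (hsc : ∀ x y : Vec d, f y + ⟪gradient f y, x - y⟫ + mu / 2 * ‖x - y‖ ^ 2 ≤ f x)
    (xstar : Vec d) (hmin : ∀ x, f xstar ≤ f x)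
    (γ : ℝ) (hγ : 0 < γ) (hγ' : γ ≤ 1 / lambdaMax (Matrix.hadamard μsamp.Pbar LL))
    (x0 : Vec d) :
    ∀ k : ℕ,
      trajExp μsamp.prob x0 (fun x S => x - γ • mact (μsamp.sketch S) (gradient f x)) f k
          - f xstar
        ≤ (1 - γ * mu) ^ k * (f x0 - f xstar) :=
  statement5_general μsamp f LL hLL hsmooth mu hmu hsc xstar γ hγ hγ' x0
end
end

section
/- (DIANA+ shift recursion.) Let f_1, …, f_n : ℝ^d → ℝ be differentiable, convex, bounded below and L_i-smooth for symmetric positive semidefinite matrices L_i, and f = (1/n) Σ_i f_i. Let C_1, …, C_n be sketches of proper samplings S_i with marginals p_{i;j}, set ω_i = max_j (1/p_{i;j}) − 1 and ω_max = max_i ω_i, and let 0 < α ≤ 1/(1 + ω_max). Let h_1, …, h_n be vectors with h_i ∈ range(L_i), and define h_i⁺ = h_i + α L_i^{1/2} C_i L_i^{†1/2} (∇f_i(x) − h_i). Then for all x, y ∈ ℝ^d: E[ (1/n) Σ_{i=1}^n ‖h_i⁺ − ∇f_i(y)‖²_{L_i†} ] ≤ (1 − α) · (1/n) Σ_{i=1}^n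 ‖h_i − ∇f_i(y)‖²_{L_i†} + 2 α D_f(x, y), where D_f(x,y) = f(x) − f(y) − ⟨∇f(y), x − y⟩. -/
open scoped BigOperators RealInnerProductSpace
open Matrix

noncomputable section

/-!
Conjugating by `L^{†1/2}` turns `‖·‖²_{L†}` into a Euclidean norm and the update into
`b + α Π C u`, with `b = L^{†1/2}(h − ∇f(y))`, `u = L^{†1/2}(∇f(x) − h)` and `Π = L^{†1/2} L^{1/2}`
the orthogonal projection onto the range of `L`, which fixes `u`. Since `E[C] = I` and
`E‖C u‖² = Σ_j u_j² / p_j ≤ α⁻¹ ‖u‖²`, expanding the square gives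
`E‖b + α Π C u‖² ≤ (1 − α)‖b‖² + α‖b + u‖²`, and `‖b + u‖² = ‖∇f(x) − ∇f(y)‖²_{L†}` is at most
`2 D_f(x, y)` by cocoercivity of convex `L`-smooth functions. The clients draw independently,
so the expectation of the average is the average of the per-client expectations.
-/

theorem IsMoorePenrose.unique {m n : Type*} [Fintype m] [Fintype n] {A : Matrix m n ℝ}
    {B C : Matrix n m ℝ} (hB : IsMoorePenrose A B) (hC : IsMoorePenrose A C) : B = C := by
  obtain ⟨hB₁, hB₂, hB₃, hB₄⟩ := hB
  obtain ⟨hC₁, hC₂, hC₃, hC₄⟩ := hC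
  have hAB : A * B = A * C :=
    calc A * B = (A * C * (A * B))ᵀ := by rw [← Matrix.mul_assoc, hC₁, hB₃]
      _ = A * B * (A * C) := by rw [transpose_mul, hB₃, hC₃]
      _ = A * C := by rw [← Matrix.mul_assoc, hB₁]
  have hBA : B * A = C * A :=
    calc B * A = (B * A * (C * A))ᵀ := by rw [Matrix.mul_assoc, ← Matrix.mul_assoc A, hC₁, hB₄]
      _ = C * A * (B * A) := by rw [transpose_mul, hB₄, hC₄]
      _ = C * A := by rw [Matrix.mul_assoc, ← Matrix.mul_assoc A, hB₁]
  calc B = B * A * B := hB₂.symm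
    _ = C * A * C := by rw [hBA, Matrix.mul_assoc, hAB, ← Matrix.mul_assoc]
    _ = C := hC₂

section FunctionalCalculus

open scoped MatrixOrder

variable {n : Type*} [Fintype n] [DecidableEq n]

/-- Lets the `cfc` calculus be used with discontinuous functions such as `x ↦ x⁻¹`. -/
theorem Matrix.continuousOn_spectrum (A : Matrix n n ℝ) (f : ℝ → ℝ) :
    ContinuousOn f (spectrum ℝ A) :=
  finite_real_spectrum.continuousOn f

/-- Since `0⁻¹ = 0`, inverting the eigenvalues pointwise gives the pseudoinverse. -/
theorem Matrix.IsHermitian.isMoorePenrose_cfc_inv {L : Matrix n n ℝ} (hL : L.IsHermitian) :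
    IsMoorePenrose L (cfc (·⁻¹ : ℝ → ℝ) L) := by
  have hc := L.continuousOn_spectrum
  have hLsa : IsSelfAdjoint L := hL
  have hsymm (f : ℝ → ℝ) : (cfc f L)ᵀ = cfc f L := by
    rw [← conjTranspose_eq_transpose_of_trivial]; exact cfc_predicate f L
  have hLinv : L * cfc (·⁻¹ : ℝ → ℝ) L = cfc (fun x : ℝ => x * x⁻¹) L := by
    rw [cfc_mul _ _ _ (hc _) (hc _), cfc_id' ℝ L]
  have hinvL : cfc (·⁻¹ : ℝ → ℝ) L * L = cfc (fun x : ℝ => x⁻¹ * x) L := by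
    rw [cfc_mul _ _ _ (hc _) (hc _), cfc_id' ℝ L]
  refine ⟨?_, ?_, by rw [hLinv, hsymm], by rw [hinvL, hsymm]⟩
  · nth_rewrite 3 [← cfc_id' ℝ L]
    rw [hLinv, ← cfc_mul _ _ _ (hc _) (hc _)]
    simp only [mul_inv_mul_cancel, cfc_id' ℝ L]
  · rw [hinvL, ← cfc_mul _ _ _ (hc _) (hc _)]
    congr 1
    funext x
    simpa using mul_inv_mul_cancel x⁻¹

theorem Matrix.PosSemidef.eq_cfc_of_mul_self_eq {L B : Matrix n n ℝ} {f g : ℝ → ℝ}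
    (hL : L.PosSemidef) (hB : B.PosSemidef) (hf : ∀ x, 0 ≤ x → 0 ≤ f x)
    (hfg : ∀ x, 0 ≤ x → f x * f x = g x) (hBB : B * B = cfc g L) : B = cfc f L := by
  have hc := L.continuousOn_spectrum
  have hspec : ∀ x ∈ spectrum ℝ L, 0 ≤ x :=
    fun x hx => spectrum_nonneg_of_nonneg (nonneg_iff_posSemidef.2 hL) hx
  rw [← CFC.mul_self_eq_mul_self_iff B _ (nonneg_iff_posSemidef.2 hB)
    (cfc_nonneg fun x hx => hf x (hspec x hx)), hBB, ← cfc_mul _ _ _ (hc _) (hc _)]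
  exact cfc_congr fun x hx => (hfg x (hspec x hx)).symm

/-- `L^{†1/2} L^{1/2}` is the orthogonal projection onto the range of `L`: it is `cfc` of the
indicator of `(0, ∞)`. -/
theorem Matrix.PosSemidef.sqrt_pinv_mul_sqrt {L Lh Ld Ldh : Matrix n n ℝ} (hL : L.PosSemidef)
    (hLh : Lh.PosSemidef) (hLh2 : Lh * Lh = L) (hLd : IsMoorePenrose L Ld)
    (hLdh : Ldh.PosSemidef) (hLdh2 : Ldh * Ldh = Ld) :
    Ldh * Lh * Ldh = Ldh ∧ (Ldh * Lh)ᵀ = Ldh * Lh := by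
  have hc := L.continuousOn_spectrum
  have hLh_eq : Lh = cfc Real.sqrt L :=
    hL.eq_cfc_of_mul_self_eq hLh (fun x _ => Real.sqrt_nonneg x)
      (fun x hx => Real.mul_self_sqrt hx) (hLh2.trans (cfc_id' ℝ L hL.1).symm)
  have hLdh_eq : Ldh = cfc (fun x => √x⁻¹) L :=
    hL.eq_cfc_of_mul_self_eq hLdh (fun x _ => Real.sqrt_nonneg _)
      (fun x hx => Real.mul_self_sqrt (inv_nonneg.2 hx))
      (by rw [hLdh2, hLd.unique hL.1.isMoorePenrose_cfc_inv])
  have hcomm : Lh * Ldh = Ldh * Lh := by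
    rw [hLh_eq, hLdh_eq, ← cfc_mul _ _ _ (hc _) (hc _), ← cfc_mul _ _ _ (hc _) (hc _)]
    simp only [mul_comm]
  constructor
  · rw [hLdh_eq, hLh_eq, ← cfc_mul _ _ _ (hc _) (hc _), ← cfc_mul _ _ _ (hc _) (hc _)]
    congr 1
    funext x
    rcases le_or_gt x 0 with hx | hx
    · simp [Real.sqrt_eq_zero'.2 hx]
    · rw [Real.sqrt_inv, inv_mul_cancel₀ (Real.sqrt_pos.2 hx).ne', one_mul]
  · rw [transpose_mul, ← conjTranspose_eq_transpose_of_trivial,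
      ← conjTranspose_eq_transpose_of_trivial, hLh.1, hLdh.1, hcomm]

end FunctionalCalculus

section EuclideanAction

variable {d e k : ℕ}

theorem mact_mul (A : Matrix (Fin k) (Fin e) ℝ) (B : Matrix (Fin e) (Fin d) ℝ) (x : Vec d) :
    mact (A * B) x = mact A (mact B x) := by
  simp [mact]

theorem mact_add (A : Matrix (Fin e) (Fin d) ℝ) (x y : Vec d) :
    mact A (x + y) = mact A x + mact A y :=
  map_add _ x y

theorem mact_smul (A : Matrix (Fin e) (Fin d) ℝ) (c : ℝ) (x : Vec d) :
    mact A (c • x) = c • mact A x :=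
  map_smul _ c x

theorem mact_sum_smul {ι : Type*} (s : Finset ι) (c : ι → ℝ)
    (A : ι → Matrix (Fin e) (Fin d) ℝ) (x : Vec d) :
    mact (∑ i ∈ s, c i • A i) x = ∑ i ∈ s, c i • mact (A i) x := by
  simp [mact, map_sum, map_smul]

theorem inner_mact_left (A : Matrix (Fin e) (Fin d) ℝ) (x : Vec d) (y : Vec e) :
    ⟪mact A x, y⟫ = ⟪x, mact Aᵀ y⟫ := by
  rw [mact, mact, ← conjTranspose_eq_transpose_of_trivial, toEuclideanLin_conjTranspose_eq_adjoint,
    LinearMap.adjoint_inner_right]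

theorem quad_neg (M : Matrix (Fin d) (Fin d) ℝ) (x : Vec d) : quad M (-x) = quad M x := by
  simp only [quad, mact, map_neg, inner_neg_neg]

theorem quad_mul_self {B : Matrix (Fin d) (Fin d) ℝ} (hB : Bᵀ = B) (x : Vec d) :
    quad (B * B) x = ‖mact B x‖ ^ 2 := by
  rw [quad, mact_mul, ← real_inner_self_eq_norm_sq, inner_mact_left, hB]

theorem norm_mact_le_of_idempotent {P : Matrix (Fin d) (Fin d) ℝ} (hPT : Pᵀ = P) (hPP : P * P = P)
    (v : Vec d) : ‖mact P v‖ ≤ ‖v‖ := by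
  have h : ‖mact P v‖ ^ 2 ≤ ‖v‖ * ‖mact P v‖ :=
    calc ‖mact P v‖ ^ 2 = ⟪v, mact P v⟫ := by
          rw [← real_inner_self_eq_norm_sq, inner_mact_left, hPT, ← mact_mul, hPP]
      _ ≤ ‖v‖ * ‖mact P v‖ := real_inner_le_norm _ _
  nlinarith [norm_nonneg v, norm_nonneg (mact P v)]

end EuclideanAction

theorem sum_mul_norm_add_smul_sq_le {E ι : Type*} [NormedAddCommGroup E] [InnerProductSpace ℝ E]
    (s : Finset ι) (p : ι → ℝ) (w : ι → E) (b u : E) (α : ℝ) (hp : ∑ i ∈ s, p i = 1)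
    (hmean : ∑ i ∈ s, p i • w i = u) (hvar : ∑ i ∈ s, p i * ‖w i‖ ^ 2 ≤ α⁻¹ * ‖u‖ ^ 2) :
    ∑ i ∈ s, p i * ‖b + α • w i‖ ^ 2 ≤ (1 - α) * ‖b‖ ^ 2 + α * ‖b + u‖ ^ 2 := by
  have hinner : ⟪b, u⟫ = ∑ i ∈ s, p i * ⟪b, w i⟫ := by
    simp only [← hmean, inner_sum, inner_smul_right]
  have hexpand : ∑ i ∈ s, p i * ‖b + α • w i‖ ^ 2
      = ‖b‖ ^ 2 + 2 * α * ⟪b, u⟫ + α ^ 2 * ∑ i ∈ s, p i * ‖w i‖ ^ 2 := by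
    calc ∑ i ∈ s, p i * ‖b + α • w i‖ ^ 2
        = ∑ i ∈ s, (p i * ‖b‖ ^ 2 + 2 * α * (p i * ⟪b, w i⟫) + α ^ 2 * (p i * ‖w i‖ ^ 2)) := by
          refine Finset.sum_congr rfl fun i _ => ?_
          rw [norm_add_sq_real, inner_smul_right, norm_smul, Real.norm_eq_abs, mul_pow, sq_abs]
          ring
      _ = ‖b‖ ^ 2 + 2 * α * ⟪b, u⟫ + α ^ 2 * ∑ i ∈ s, p i * ‖w i‖ ^ 2 := by
          rw [Finset.sum_add_distrib, Finset.sum_add_distrib, ← Finset.sum_mul, hp, one_mul,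
            ← Finset.mul_sum, ← Finset.mul_sum, hinner]
  calc ∑ i ∈ s, p i * ‖b + α • w i‖ ^ 2
      ≤ ‖b‖ ^ 2 + 2 * α * ⟪b, u⟫ + α ^ 2 * (α⁻¹ * ‖u‖ ^ 2) := by
        rw [hexpand]; gcongr
    _ = (1 - α) * ‖b‖ ^ 2 + α * ‖b + u‖ ^ 2 := by
        rw [norm_add_sq_real, ← mul_assoc, sq α, mul_self_mul_inv]; ring

theorem ConvexOn.add_inner_gradient_le {E : Type*} [NormedAddCommGroup E]
    [InnerProductSpace ℝ E] [CompleteSpace E] {f : E → ℝ} (hf : ConvexOn ℝ Set.univ f) {y : E}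
    (hfy : DifferentiableAt ℝ f y) (z : E) : f y + ⟪gradient f y, z - y⟫ ≤ f z := by
  have hline : ConvexOn ℝ Set.univ (f ∘ (AffineMap.lineMap y z : ℝ →ᵃ[ℝ] E)) := by
    simpa using hf.comp_affineMap (AffineMap.lineMap y z)
  have hderiv : HasDerivAt (f ∘ (AffineMap.lineMap y z : ℝ →ᵃ[ℝ] E)) ⟪gradient f y, z - y⟫ 0 := by
    rw [inner_gradient_left]
    exact hfy.hasFDerivAt.comp_hasDerivAt_of_eq 0 AffineMap.hasDerivAt_lineMap
      (AffineMap.lineMap_apply_zero y z).symm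
  have hslope := hline.le_slope_of_hasDerivAt (Set.mem_univ 0) (Set.mem_univ 1) zero_lt_one hderiv
  simp only [slope_def_field, Function.comp_apply, AffineMap.lineMap_apply_one,
    AffineMap.lineMap_apply_zero, sub_zero, div_one] at hslope
  linarith

theorem MSmooth.quad_gradient_sub_le {d : ℕ} {f : Vec d → ℝ} {L Ld : Matrix (Fin d) (Fin d) ℝ}
    (hsm : MSmooth f L) (hconv : ConvexOn ℝ Set.univ f) {y : Vec d}
    (hfy : DifferentiableAt ℝ f y) (hLdT : Ldᵀ = Ld) (hLdL : Ld * L * Ld = Ld) (x : Vec d) :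
    quad Ld (gradient f x - gradient f y) ≤ 2 * (f x - f y - ⟪gradient f y, x - y⟫) := by
  set g := gradient f x - gradient f y
  -- compare the smoothness bound at `z = x - L† g` with the convexity bound from `y`
  set z := x - mact Ld g with hz
  have hzx : z - x = -mact Ld g := by rw [hz]; abel
  have hq : quad L (z - x) = quad Ld g := by
    rw [hzx, quad_neg, quad, inner_mact_left, hLdT, ← mact_mul, ← mact_mul, hLdL, quad]
  have hgx : ⟪gradient f x, z - x⟫ = -⟪gradient f x, mact Ld g⟫ := by
    rw [hzx, inner_neg_right]
  have hgy : ⟪gradient f y, z - y⟫ = ⟪gradient f y, x - y⟫ - ⟪gradient f y, mact Ld g⟫ := by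
    rw [show z - y = (x - y) - mact Ld g by rw [hz]; abel, inner_sub_right]
  have hg : ⟪gradient f x, mact Ld g⟫ - ⟪gradient f y, mact Ld g⟫ = quad Ld g := by
    rw [← inner_sub_left, quad]
  have hupper := hsm z x
  have hlower := hconv.add_inner_gradient_le hfy z
  rw [hq, hgx] at hupper
  rw [hgy] at hlower
  linarith

theorem inner_gradient_const_mul_sum {E ι : Type*} [NormedAddCommGroup E]
    [InnerProductSpace ℝ E] [CompleteSpace E] (s : Finset ι) (c : ℝ) {g : ι → E → ℝ} {y : E}
    (hg : ∀ i ∈ s, DifferentiableAt ℝ (g i) y) (v : E) :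
    ⟪gradient (fun z => c * ∑ i ∈ s, g i z) y, v⟫ = c * ∑ i ∈ s, ⟪gradient (g i) y, v⟫ := by
  simp only [inner_gradient_left]
  rw [fderiv_const_mul (DifferentiableAt.fun_sum hg), fderiv_fun_sum hg]
  simp

theorem sum_pi_prod_mul_sum_apply {ι Ω : Type*} [Fintype ι] [DecidableEq ι] [Fintype Ω]
    (P : ι → Ω → ℝ) (hP : ∀ i, ∑ s, P i s = 1) (q : ι → Ω → ℝ) :
    ∑ ω : ι → Ω, (∏ i, P i (ω i)) * ∑ i, q i (ω i) = ∑ i, ∑ s, P i s * q i s := by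
  simp_rw [Finset.mul_sum]
  rw [Finset.sum_comm]
  refine Finset.sum_congr rfl fun i _ => ?_
  have hfactor (ω : ι → Ω) : (∏ k, P k (ω k)) * q i (ω i)
      = ∏ k, P k (ω k) * (if k = i then q i (ω k) else 1) := by
    rw [Finset.prod_mul_distrib, Finset.prod_ite_eq', if_pos (Finset.mem_univ i)]
  calc ∑ ω : ι → Ω, (∏ k, P k (ω k)) * q i (ω i)
      = ∑ ω : ι → Ω, ∏ k, P k (ω k) * (if k = i then q i (ω k) else 1) :=
        Finset.sum_congr rfl fun ω _ => hfactor ω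
    _ = ∏ k, ∑ s, P k s * (if k = i then q i s else 1) :=
        (Fintype.prod_sum fun k s => P k s * if k = i then q i s else 1).symm
    _ = ∑ s, P i s * q i s := by
        rw [Finset.prod_eq_single i (fun k _ hk => by simp [hk, hP]) (by simp)]
        simp

namespace Sampling

variable {d : ℕ} (μ : Sampling d)

theorem sum_prob_mul_ite_mem (j : Fin d) (c : ℝ) :
    ∑ S, μ.prob S * (if j ∈ S then c else 0) = μ.marg j * c := by
  simp only [mul_ite, mul_zero, marg, Finset.sum_mul, ite_mul, zero_mul]

theorem sum_prob_mul_norm_mact_sketch_sq (u : Vec d) :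
    ∑ S, μ.prob S * ‖mact (μ.sketch S) u‖ ^ 2 = ∑ j, (μ.marg j)⁻¹ * u j ^ 2 := by
  have hcoord (S : Finset (Fin d)) (j : Fin d) :
      mact (μ.sketch S) u j ^ 2 = if j ∈ S then ((μ.marg j)⁻¹ * u j) ^ 2 else 0 := by
    simp [mact, sketch, mulVec_diagonal, ite_mul]
  simp only [EuclideanSpace.real_norm_sq_eq, hcoord, Finset.mul_sum]
  rw [Finset.sum_comm]
  refine Finset.sum_congr rfl fun j _ => ?_
  rw [sum_prob_mul_ite_mem]
  field_simp [(μ.marg_pos j).ne']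

theorem sum_prob_mul_norm_mact_sketch_sq_le {α : ℝ} (hα : 0 < α) (hαμ : ∀ j, α ≤ μ.marg j)
    (u : Vec d) : ∑ S, μ.prob S * ‖mact (μ.sketch S) u‖ ^ 2 ≤ α⁻¹ * ‖u‖ ^ 2 := by
  rw [sum_prob_mul_norm_mact_sketch_sq, EuclideanSpace.real_norm_sq_eq, Finset.mul_sum]
  gcongr with j
  exact hαμ j

theorem sum_prob_mul_quad_add_smul_le
    {L Lh Ld Ldh : Matrix (Fin d) (Fin d) ℝ} (hL : L.PosSemidef) (hLh : Lh.PosSemidef)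
    (hLh2 : Lh * Lh = L) (hLd : IsMoorePenrose L Ld) (hLdh : Ldh.PosSemidef)
    (hLdh2 : Ldh * Ldh = Ld) {α : ℝ} (hα : 0 < α) (hαμ : ∀ j, α ≤ μ.marg j) (a m : Vec d) :
    ∑ S, μ.prob S * quad Ld (a + α • mact (Lh * μ.sketch S * Ldh) m)
      ≤ (1 - α) * quad Ld a + α * quad Ld (a + m) := by
  obtain ⟨hPLdh, hPT⟩ := hL.sqrt_pinv_mul_sqrt hLh hLh2 hLd hLdh hLdh2
  set P := Ldh * Lh
  have hPP : P * P = P := by rw [← Matrix.mul_assoc, hPLdh]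
  have hLdhT : Ldhᵀ = Ldh := by
    rw [← conjTranspose_eq_transpose_of_trivial]; exact hLdh.1
  have hPu : mact P (mact Ldh m) = mact Ldh m := by rw [← mact_mul, hPLdh]
  have hupdate (S : Finset (Fin d)) :
      mact Ldh (a + α • mact (Lh * μ.sketch S * Ldh) m)
        = mact Ldh a + α • mact (P * μ.sketch S) (mact Ldh m) := by
    rw [mact_add, mact_smul, ← mact_mul, ← mact_mul, Matrix.mul_assoc, Matrix.mul_assoc,
      Matrix.mul_assoc]
  simp only [← hLdh2, quad_mul_self hLdhT, hupdate, mact_add]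
  refine sum_mul_norm_add_smul_sq_le _ _ _ _ _ _ μ.total ?_ ?_
  · simp_rw [← mact_sum_smul, ← mul_smul_comm, ← Finset.mul_sum, μ.sum_prob_smul_sketch, mul_one,
      hPu]
  · calc ∑ S, μ.prob S * ‖mact (P * μ.sketch S) (mact Ldh m)‖ ^ 2
        ≤ ∑ S, μ.prob S * ‖mact (μ.sketch S) (mact Ldh m)‖ ^ 2 := by
          gcongr with S
          · exact μ.nonneg S
          · rw [mact_mul]; exact norm_mact_le_of_idempotent hPT hPP _
      _ ≤ α⁻¹ * ‖mact Ldh m‖ ^ 2 := μ.sum_prob_mul_norm_mact_sketch_sq_le hα hαμ _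

theorem sum_prob_mul_quad_shift_sub_gradient_le {L Lh Ld Ldh : Matrix (Fin d) (Fin d) ℝ}
    (hL : L.PosSemidef) (hLh : Lh.PosSemidef) (hLh2 : Lh * Lh = L) (hLd : IsMoorePenrose L Ld)
    (hLdh : Ldh.PosSemidef) (hLdh2 : Ldh * Ldh = Ld) {f : Vec d → ℝ} (hdiff : Differentiable ℝ f)
    (hconv : ConvexOn ℝ Set.univ f) (hsm : MSmooth f L) {α : ℝ} (hα : 0 < α)
    (hαμ : ∀ j, α ≤ μ.marg j) (h x y : Vec d) :
    ∑ S, μ.prob S * quad Ld (h + α • mact (Lh * μ.sketch S * Ldh) (gradient f x - h) - gradient f y)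
      ≤ (1 - α) * quad Ld (h - gradient f y)
        + α * (2 * (f x - f y - ⟪gradient f y, x - y⟫)) := by
  have hLdT : Ldᵀ = Ld := by
    rw [← hLdh2, transpose_mul, ← conjTranspose_eq_transpose_of_trivial, hLdh.1]
  have hshift := μ.sum_prob_mul_quad_add_smul_le hL hLh hLh2 hLd hLdh hLdh2 hα hαμ
    (h - gradient f y) (gradient f x - h)
  rw [sub_add_sub_cancel'] at hshift
  simp only [add_sub_right_comm]
  refine hshift.trans ?_
  gcongr
  exact hsm.quad_gradient_sub_le hconv (hdiff y) hLdT hLd.2.1 x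

theorem le_marg_of_le_one_div {n : ℕ} (μs : Fin n → Sampling d) {α : ℝ}
    (hα : α ≤ 1 / (1 + ⨆ i, ((⨆ j : Fin d, ((μs i).marg j)⁻¹) - 1))) (i : Fin n) (j : Fin d) :
    α ≤ (μs i).marg j := by
  have hj : ((μs i).marg j)⁻¹ ≤ ⨆ j, ((μs i).marg j)⁻¹ :=
    le_ciSup (f := fun j => ((μs i).marg j)⁻¹) (Set.finite_range _).bddAbove j
  have hi : (⨆ j, ((μs i).marg j)⁻¹) - 1 ≤ ⨆ i, ((⨆ j : Fin d, ((μs i).marg j)⁻¹) - 1) :=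
    le_ciSup (f := fun i => (⨆ j : Fin d, ((μs i).marg j)⁻¹) - 1) (Set.finite_range _).bddAbove i
  calc α ≤ 1 / (1 + ⨆ i, ((⨆ j : Fin d, ((μs i).marg j)⁻¹) - 1)) := hα
    _ ≤ 1 / ((μs i).marg j)⁻¹ :=
        one_div_le_one_div_of_le (inv_pos.2 ((μs i).marg_pos j)) (by linarith)
    _ = (μs i).marg j := by rw [one_div, inv_inv]

end Sampling

theorem statement12_general {d n : ℕ} (μs : Fin n → Sampling d)
    (fi : Fin n → Vec d → ℝ) (Li Lih Lidag Lidh : Fin n → Matrix (Fin d) (Fin d) ℝ)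
    (hLi : ∀ i, (Li i).PosSemidef)
    (hfi : ∀ i, Differentiable ℝ (fi i) ∧ ConvexOn ℝ Set.univ (fi i) ∧
      BddBelow (Set.range (fi i)) ∧ MSmooth (fi i) (Li i))
    (hLih : ∀ i, (Lih i).PosSemidef ∧ Lih i * Lih i = Li i)
    (hLidag : ∀ i, IsMoorePenrose (Li i) (Lidag i))
    (hLidh : ∀ i, (Lidh i).PosSemidef ∧ Lidh i * Lidh i = Lidag i)
    (f : Vec d → ℝ) (hf : f = fun x => (1 / (n : ℝ)) * ∑ i, fi i x)
    (omegaMax : ℝ) (homega : omegaMax = ⨆ i, ((⨆ j : Fin d, ((μs i).marg j)⁻¹) - 1))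
    (α : ℝ) (hα0 : 0 < α) (hα1 : α ≤ 1 / (1 + omegaMax))
    (h : Fin n → Vec d)
    (x : Vec d) (hplus : Fin n → Finset (Fin d) → Vec d)
    (hhplus : hplus = fun i S =>
      h i + α • mact (Lih i * (μs i).sketch S * Lidh i) (gradient (fi i) x - h i)) :
    ∀ y : Vec d,
      (∑ ω : Fin n → Finset (Fin d), (∏ i, (μs i).prob (ω i)) *
          ((1 / (n : ℝ)) * ∑ i, quad (Lidag i) (hplus i (ω i) - gradient (fi i) y)))
        ≤ (1 - α) * ((1 / (n : ℝ)) * ∑ i, quad (Lidag i) (h i - gradient (fi i) y))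
          + 2 * α * (f x - f y - ⟪gradient f y, x - y⟫) := by
  intro y
  have hαμ := Sampling.le_marg_of_le_one_div μs (homega ▸ hα1)
  have hclient (i : Fin n) :
      ∑ S, (μs i).prob S * quad (Lidag i) (hplus i S - gradient (fi i) y)
        ≤ (1 - α) * quad (Lidag i) (h i - gradient (fi i) y)
          + α * (2 * (fi i x - fi i y - ⟪gradient (fi i) y, x - y⟫)) := by
    subst hhplus
    exact (μs i).sum_prob_mul_quad_shift_sub_gradient_le (hLi i) (hLih i).1 (hLih i).2 (hLidag i)
      (hLidh i).1 (hLidh i).2 (hfi i).1 (hfi i).2.1 (hfi i).2.2.2 hα0 (hαμ i) (h i) x y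
  have hD : f x - f y - ⟪gradient f y, x - y⟫
      = 1 / (n : ℝ) * ∑ i, (fi i x - fi i y - ⟪gradient (fi i) y, x - y⟫) := by
    simp only [hf, inner_gradient_const_mul_sum _ _ (fun i _ => (hfi i).1 y),
      Finset.sum_sub_distrib]
    ring
  calc (∑ ω : Fin n → Finset (Fin d), (∏ i, (μs i).prob (ω i)) *
          ((1 / (n : ℝ)) * ∑ i, quad (Lidag i) (hplus i (ω i) - gradient (fi i) y)))
      = 1 / (n : ℝ) * ∑ i, ∑ S, (μs i).prob S * quad (Lidag i) (hplus i S - gradient (fi i) y) := by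
        rw [← sum_pi_prod_mul_sum_apply _ (fun i => (μs i).total), Finset.mul_sum]
        exact Finset.sum_congr rfl fun ω _ => by ring
    _ ≤ 1 / (n : ℝ) * ∑ i, ((1 - α) * quad (Lidag i) (h i - gradient (fi i) y)
          + α * (2 * (fi i x - fi i y - ⟪gradient (fi i) y, x - y⟫))) := by
        gcongr with i
        exact hclient i
    _ = _ := by
        rw [hD, Finset.sum_add_distrib, ← Finset.mul_sum, ← Finset.mul_sum, ← Finset.mul_sum]
        ring

/-- DIANA+ shift recursion. With `ω_i = max_j 1/p_{i;j} − 1`,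
`0 < α ≤ 1/(1+ω_max)` and updates `h_i⁺ = h_i + α C̄_i (∇f_i(x) − h_i)`,
`E[(1/n) Σ_i ‖h_i⁺ − ∇f_i(y)‖²_{L_i†}] ≤ (1−α)(1/n) Σ_i ‖h_i − ∇f_i(y)‖²_{L_i†} + 2α D_f(x,y)`. -/
theorem statement12 {d n : ℕ} (hd : 0 < d) (hn : 0 < n) (μs : Fin n → Sampling d)
    (fi : Fin n → Vec d → ℝ) (Li Lih Lidag Lidh : Fin n → Matrix (Fin d) (Fin d) ℝ)
    (hLi : ∀ i, (Li i).PosSemidef)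
    (hfi : ∀ i, Differentiable ℝ (fi i) ∧ ConvexOn ℝ Set.univ (fi i) ∧
      BddBelow (Set.range (fi i)) ∧ MSmooth (fi i) (Li i))
    (hLih : ∀ i, (Lih i).PosSemidef ∧ Lih i * Lih i = Li i)
    (hLidag : ∀ i, IsMoorePenrose (Li i) (Lidag i))
    (hLidh : ∀ i, (Lidh i).PosSemidef ∧ Lidh i * Lidh i = Lidag i)
    (f : Vec d → ℝ) (hf : f = fun x => (1 / (n : ℝ)) * ∑ i, fi i x)
    (omegaMax : ℝ) (homega : omegaMax = ⨆ i, ((⨆ j : Fin d, ((μs i).marg j)⁻¹) - 1))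
    (α : ℝ) (hα0 : 0 < α) (hα1 : α ≤ 1 / (1 + omegaMax))
    (h : Fin n → Vec d) (hh : ∀ i, h i ∈ Set.range (mact (Li i)))
    (x : Vec d) (hplus : Fin n → Finset (Fin d) → Vec d)
    (hhplus : hplus = fun i S =>
      h i + α • mact (Lih i * (μs i).sketch S * Lidh i) (gradient (fi i) x - h i)) :
    ∀ y : Vec d,
      (∑ ω : Fin n → Finset (Fin d), (∏ i, (μs i).prob (ω i)) *
          ((1 / (n : ℝ)) * ∑ i, quad (Lidag i) (hplus i (ω i) - gradient (fi i) y)))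
        ≤ (1 - α) * ((1 / (n : ℝ)) * ∑ i, quad (Lidag i) (h i - gradient (fi i) y))
          + 2 * α * (f x - f y - ⟪gradient f y, x - y⟫) :=
  statement12_general μs fi Li Lih Lidag Lidh hLi hfi hLih hLidag hLidh f hf omegaMax homega α hα0
    hα1 h x hplus hhplus

end
end
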